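/- Let k > 0 and let w_k be the unique real number w with -1 ≤ w < 0 satisfying w·exp(w) = -(k+1)·exp(-(k+1)). Then y = w_k + k + 1 is positive and is the unique positive solution of the equation y/(1 - exp(-y)) = k + 1. Consequently, at the price p3 = v - k - 1 (the border between Regions 2 and 3, where λ0 = 0 and v - p = k + 1), the equilibrium arrival rate in period 1 equals λ1 = w_k + k + 1 and the firm's profit equals π3 = (v - k - 1)·(1 - exp(-(w_k + k + 1))). -/

import Mathlib

/-!
Clearing the denominator, `y / (1 - e^{-y}) = c` becomes `u e^u = -c e^{-c}` for `u = y - c`.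
The map `x ↦ x eˣ` decreases on `(-∞, -1]` and increases on `[-1, ∞)`, so for `c = k + 1 > 1`
this equation has exactly the two roots `u = -(k + 1)` (that is `y = 0`, excluded) and `u = w_k`.
-/

open Real Set

lemma hasDerivAt_mul_exp (x : ℝ) :
    HasDerivAt (fun x => x * exp x) ((1 + x) * exp x) x :=
  ((hasDerivAt_id' x).mul (hasDerivAt_exp x)).congr_deriv (by ring)

lemma strictMonoOn_mul_exp : StrictMonoOn (fun x => x * exp x) (Ici (-1)) := by
  refine strictMonoOn_of_deriv_pos (convex_Ici _) (by fun_prop) fun x hx => ?_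
  rw [interior_Ici, mem_Ioi] at hx
  rw [(hasDerivAt_mul_exp x).deriv]
  have : 0 < 1 + x := by linarith
  positivity

lemma strictAntiOn_mul_exp : StrictAntiOn (fun x => x * exp x) (Iic (-1)) := by
  refine strictAntiOn_of_deriv_neg (convex_Iic _) (by fun_prop) fun x hx => ?_
  rw [interior_Iic, mem_Iio] at hx
  rw [(hasDerivAt_mul_exp x).deriv]
  exact mul_neg_of_neg_of_pos (by linarith) (exp_pos x)

lemma eq_or_eq_of_mul_exp_eq {a b x : ℝ} (ha : a ≤ -1) (hb : -1 ≤ b)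
    (hab : a * exp a = b * exp b) (hx : x * exp x = b * exp b) : x = a ∨ x = b := by
  rcases le_total x (-1) with hx1 | hx1
  · exact .inl (strictAntiOn_mul_exp.injOn hx1 ha (hx.trans hab.symm))
  · exact .inr (strictMonoOn_mul_exp.injOn hx1 hb hx)

lemma div_one_sub_exp_neg_eq_iff {y : ℝ} (hy : y ≠ 0) (c : ℝ) :
    y / (1 - exp (-y)) = c ↔ (y - c) * exp (y - c) = -c * exp (-c) := by
  have hden : 1 - exp (-y) ≠ 0 := by
    rw [sub_ne_zero, ne_comm, Ne, exp_eq_one_iff, neg_eq_zero]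
    exact hy
  rw [div_eq_iff hden, exp_sub, exp_neg, exp_neg]
  field_simp
  constructor <;> intro h <;> linarith

theorem stmt7_general (k v w : ℝ) (hk : 0 < k) (hw1 : -1 ≤ w)
    (hwe : w * Real.exp w = -(k + 1) * Real.exp (-(k + 1))) :
    0 < w + k + 1 ∧
    (w + k + 1) / (1 - Real.exp (-(w + k + 1))) = k + 1 ∧
    (∀ y : ℝ, 0 < y → y / (1 - Real.exp (-y)) = k + 1 → y = w + k + 1) ∧
    (∀ l : ℝ, 0 < l → v - (v - k - 1) = l / (1 - Real.exp (-l)) →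
      l = w + k + 1 ∧
      (v - k - 1) * (1 - Real.exp (-l)) =
        (v - k - 1) * (1 - Real.exp (-(w + k + 1)))) := by
  have hpos : 0 < w + k + 1 := by linarith
  have hsolves : (w + k + 1) / (1 - exp (-(w + k + 1))) = k + 1 := by
    rw [div_one_sub_exp_neg_eq_iff hpos.ne']
    rwa [show w + k + 1 - (k + 1) = w by ring]
  have huniq : ∀ y : ℝ, 0 < y → y / (1 - exp (-y)) = k + 1 → y = w + k + 1 := by
    intro y hy hsol
    rw [div_one_sub_exp_neg_eq_iff hy.ne', ← hwe] at hsol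
    rcases eq_or_eq_of_mul_exp_eq (by linarith) hw1 hwe.symm hsol with h | h <;> linarith
  refine ⟨hpos, hsolves, huniq, fun l hl hsol => ?_⟩
  obtain rfl := huniq l hl (by linarith)
  exact ⟨rfl, rfl⟩

/-- With `w = w_k` the value in `[-1, 0)` satisfying `w·eʷ = -(k+1)·e^{-(k+1)}`,
`y = w + k + 1` is positive and is the unique positive solution of
`y/(1 - exp(-y)) = k + 1`.  Consequently at the border price `p3 = v - k - 1`
(where `v - p3 = k + 1`), the period-1 arrival rate equals `w + k + 1` and the
profit equals `(v - k - 1)·(1 - exp(-(w + k + 1)))`. -/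
theorem stmt7 (k v w : ℝ) (hk : 0 < k) (hw1 : -1 ≤ w) (hw2 : w < 0)
    (hwe : w * Real.exp w = -(k + 1) * Real.exp (-(k + 1))) :
    0 < w + k + 1 ∧
    (w + k + 1) / (1 - Real.exp (-(w + k + 1))) = k + 1 ∧
    (∀ y : ℝ, 0 < y → y / (1 - Real.exp (-y)) = k + 1 → y = w + k + 1) ∧
    (∀ l : ℝ, 0 < l → v - (v - k - 1) = l / (1 - Real.exp (-l)) →
      l = w + k + 1 ∧
      (v - k - 1) * (1 - Real.exp (-l)) =
        (v - k - 1) * (1 - Real.exp (-(w + k + 1)))) :=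
  stmt7_general k v w hk hw1 hwe
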